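/- Let H be a Hilbert space and S : H → H nonexpansive (‖S(x) − S(y)‖ ≤ ‖x − y‖) with at least one fixed point. Let {κ_n} ⊂ (0,1] satisfy Σ κ_n(1 − κ_n) = ∞. Then the Krasnosel'skii–Mann iteration Y_{n+1} = (1 − κ_n)Y_n + κ_n S(Y_n) converges weakly to a fixed point of S. -/

import Mathlib

open Filter Topology

/-!
Fejér monotonicity: for every fixed point `p`,
`‖Y (n+1) - p‖² ≤ ‖Y n - p‖² - κ n (1 - κ n) ‖S (Y n) - Y n‖²`, so the distances to `p`
converge and `∑ κ n (1 - κ n) ‖S (Y n) - Y n‖² < ∞`. The residual `‖S (Y n) - Y n‖` is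
nonincreasing, so the divergence of `∑ κ n (1 - κ n)` forces it to `0`. The bounded sequence
has a weak limit along every ultrafilter (Banach–Alaoglu); demiclosedness of `id - S` makes each
such limit a fixed point, and since distances to fixed points converge, Opial's argument shows
that all of them coincide.
-/

open Function RealInnerProductSpace

theorem Antitone.tendsto_zero_of_summable_mul_of_not_summable {a r : ℕ → ℝ} (hr : Antitone r)
    (hr₀ : ∀ n, 0 ≤ r n) (ha : ∀ n, 0 ≤ a n) (hsum : Summable fun n => a n * r n)
    (hdiv : ¬Summable a) : Tendsto r atTop (𝓝 0) := by
  have hbdd : BddBelow (Set.range r) := ⟨0, Set.forall_mem_range.2 hr₀⟩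
  have hc₀ : 0 ≤ ⨅ n, r n := le_ciInf hr₀
  obtain hc | hc := hc₀.eq_or_lt
  · simpa only [← hc] using tendsto_atTop_ciInf hr hbdd
  · refine absurd ((hsum.div_const (⨅ n, r n)).of_nonneg_of_le ha fun n => ?_) hdiv
    rw [le_div_iff₀ hc]
    exact mul_le_mul_of_nonneg_left (ciInf_le hbdd n) (ha n)

section InnerProductSpace

variable {H : Type*} [NormedAddCommGroup H] [InnerProductSpace ℝ H]

theorem norm_one_sub_smul_add_smul_sq (t : ℝ) (a b : H) :
    ‖(1 - t) • a + t • b‖ ^ 2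
      = (1 - t) * ‖a‖ ^ 2 + t * ‖b‖ ^ 2 - t * (1 - t) * ‖a - b‖ ^ 2 := by
  simp only [← real_inner_self_eq_norm_sq, inner_add_left, inner_add_right, inner_sub_left,
    inner_sub_right, real_inner_smul_left, real_inner_smul_right, real_inner_comm a b]
  ring

/-- Banach–Alaoglu, transported to `H` by the Riesz representation. -/
theorem exists_tendsto_inner_of_norm_le [CompleteSpace H] {α : Type*} (U : Ultrafilter α)
    {u : α → H} {B : ℝ} (hu : ∀ a, ‖u a‖ ≤ B) :
    ∃ x : H, ∀ z, Tendsto (fun a => ⟪u a, z⟫) U (𝓝 ⟪x, z⟫) := by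
  let v : α → WeakDual ℝ H := fun a => StrongDual.toWeakDual (InnerProductSpace.toDual ℝ H (u a))
  have hv : ∀ a, v a ∈ WeakDual.toStrongDual ⁻¹' Metric.closedBall 0 B := fun a => by
    simpa [v] using hu a
  obtain ⟨f, -, hf⟩ := (WeakDual.isCompact_closedBall 0 B).ultrafilter_le_nhds (U.map v)
    (by rw [Ultrafilter.coe_map, le_principal_iff, mem_map]; exact univ_mem' hv)
  refine ⟨(InnerProductSpace.toDual ℝ H).symm (WeakDual.toStrongDual f), fun z => ?_⟩
  rw [InnerProductSpace.toDual_symm_apply]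
  exact ((WeakDual.eval_continuous z).tendsto f).comp hf

/-- Demiclosedness of `id - S` at `0` for a nonexpansive `S`. -/
theorem isFixedPt_of_tendsto_inner {α : Type*} {l : Filter α} [l.NeBot] {S : H → H}
    (hS : ∀ x y, ‖S x - S y‖ ≤ ‖x - y‖) {u : α → H} {B : ℝ} (hu : ∀ a, ‖u a‖ ≤ B) {x : H}
    (hx : ∀ z, Tendsto (fun a => ⟪u a, z⟫) l (𝓝 ⟪x, z⟫))
    (hres : Tendsto (fun a => ‖S (u a) - u a‖) l (𝓝 0)) : IsFixedPt S x := by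
  set d := x - S x
  have key : ∀ a, 2 * ⟪u a - x, d⟫ + ‖d‖ ^ 2
      ≤ 2 * (‖S (u a) - u a‖ * ‖u a - x‖) + ‖S (u a) - u a‖ ^ 2 := fun a => by
    have hsplit : u a - S x = (u a - x) + d := by simp [d]
    have htri : ‖u a - S x‖ ≤ ‖S (u a) - u a‖ + ‖u a - x‖ := by
      calc ‖u a - S x‖ ≤ ‖u a - S (u a)‖ + ‖S (u a) - S x‖ :=
            norm_sub_le_norm_sub_add_norm_sub _ _ _
        _ ≤ ‖S (u a) - u a‖ + ‖u a - x‖ := by rw [norm_sub_rev]; gcongr; exact hS _ _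
    have := pow_le_pow_left₀ (norm_nonneg _) htri 2
    rw [hsplit, norm_add_sq_real] at this
    nlinarith
  have hlhs : Tendsto (fun a => 2 * ⟪u a - x, d⟫ + ‖d‖ ^ 2) l (𝓝 (2 * 0 + ‖d‖ ^ 2)) := by
    refine (Tendsto.const_mul 2 ?_).add_const _
    simpa only [inner_sub_left, sub_self] using (hx d).sub_const ⟪x, d⟫
  have hbdd : IsBoundedUnder (· ≤ ·) l (fun a => ‖‖u a - x‖‖) :=
    isBoundedUnder_of ⟨B + ‖x‖, fun a => by
      rw [norm_norm]; exact (norm_sub_le _ _).trans (by gcongr; exact hu a)⟩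
  have hrhs : Tendsto (fun a => 2 * (‖S (u a) - u a‖ * ‖u a - x‖) + ‖S (u a) - u a‖ ^ 2) l
      (𝓝 (2 * 0 + 0 ^ 2)) :=
    ((hres.zero_mul_isBoundedUnder_le hbdd).const_mul 2).add (hres.pow 2)
  have hd : ‖d‖ ^ 2 ≤ 0 := by
    simpa using le_of_tendsto_of_tendsto' hlhs hrhs key
  exact (sub_eq_zero.1 (norm_eq_zero.1 (by nlinarith [norm_nonneg d]))).symm

/-- Opial: `⟪u a, x₁ - x₂⟫` is an affine combination of `‖u a - x₁‖²` and `‖u a - x₂‖²`, so it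
has a single limit along `l`. -/
theorem eq_of_tendsto_inner_of_tendsto_norm_sub {α : Type*} {l l₁ l₂ : Filter α} [l₁.NeBot]
    [l₂.NeBot] (h₁ : l₁ ≤ l) (h₂ : l₂ ≤ l) {u : α → H} {x₁ x₂ : H} {d₁ d₂ : ℝ}
    (hd₁ : Tendsto (fun a => ‖u a - x₁‖) l (𝓝 d₁)) (hd₂ : Tendsto (fun a => ‖u a - x₂‖) l (𝓝 d₂))
    (hx₁ : ∀ z, Tendsto (fun a => ⟪u a, z⟫) l₁ (𝓝 ⟪x₁, z⟫))
    (hx₂ : ∀ z, Tendsto (fun a => ⟪u a, z⟫) l₂ (𝓝 ⟪x₂, z⟫)) : x₁ = x₂ := by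
  have key : ∀ a, ⟪u a, x₁ - x₂⟫ = (‖u a - x₂‖ ^ 2 - ‖u a - x₁‖ ^ 2 + ‖x₁‖ ^ 2 - ‖x₂‖ ^ 2) / 2 :=
    fun a => by rw [inner_sub_right, norm_sub_sq_real, norm_sub_sq_real]; ring
  have hL : Tendsto (fun a => ⟪u a, x₁ - x₂⟫) l
      (𝓝 ((d₂ ^ 2 - d₁ ^ 2 + ‖x₁‖ ^ 2 - ‖x₂‖ ^ 2) / 2)) := by
    simp only [key]
    exact ((((hd₂.pow 2).sub (hd₁.pow 2)).add_const _).sub_const _).div_const 2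
  have e₁ := tendsto_nhds_unique (hx₁ _) (hL.mono_left h₁)
  have e₂ := tendsto_nhds_unique (hx₂ _) (hL.mono_left h₂)
  exact sub_eq_zero.1 ((inner_self_eq_zero (𝕜 := ℝ)).1 (by rw [inner_sub_left, e₁, e₂, sub_self]))

end InnerProductSpace

namespace KrasnoselskiiMann

variable {H : Type*} [NormedAddCommGroup H] [InnerProductSpace ℝ H] {S : H → H} {κ : ℕ → ℝ}
  {Y : ℕ → H}

theorem norm_sub_sq_succ_le (hS : ∀ x y, ‖S x - S y‖ ≤ ‖x - y‖)
    (hY : ∀ n, Y (n + 1) = (1 - κ n) • Y n + κ n • S (Y n)) {p : H} (hp : IsFixedPt S p)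
    {n : ℕ} (hκ : 0 ≤ κ n) :
    ‖Y (n + 1) - p‖ ^ 2 ≤ ‖Y n - p‖ ^ 2 - κ n * (1 - κ n) * ‖S (Y n) - Y n‖ ^ 2 := by
  have hSp : ‖S (Y n) - p‖ ≤ ‖Y n - p‖ := by simpa only [hp.eq] using hS (Y n) p
  have hsplit : Y (n + 1) - p = (1 - κ n) • (Y n - p) + κ n • (S (Y n) - p) := by
    rw [hY n]; module
  rw [hsplit, norm_one_sub_smul_add_smul_sq, sub_sub_sub_cancel_right,
    norm_sub_rev (Y n) (S (Y n))]
  nlinarith [pow_le_pow_left₀ (norm_nonneg _) hSp 2]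

theorem antitone_norm_sub (hS : ∀ x y, ‖S x - S y‖ ≤ ‖x - y‖) (hκ : ∀ n, κ n ∈ Set.Icc 0 1)
    (hY : ∀ n, Y (n + 1) = (1 - κ n) • Y n + κ n • S (Y n)) {p : H} (hp : IsFixedPt S p) :
    Antitone fun n => ‖Y n - p‖ := by
  refine antitone_nat_of_succ_le fun n => pow_le_pow_iff_left₀ (norm_nonneg _) (norm_nonneg _)
    two_ne_zero |>.1 ((norm_sub_sq_succ_le hS hY hp (hκ n).1).trans (sub_le_self _ ?_))
  exact mul_nonneg (mul_nonneg (hκ n).1 (sub_nonneg.2 (hκ n).2)) (sq_nonneg _)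

theorem antitone_norm_apply_sub (hS : ∀ x y, ‖S x - S y‖ ≤ ‖x - y‖)
    (hκ : ∀ n, κ n ∈ Set.Icc 0 1) (hY : ∀ n, Y (n + 1) = (1 - κ n) • Y n + κ n • S (Y n)) :
    Antitone fun n => ‖S (Y n) - Y n‖ := by
  refine antitone_nat_of_succ_le fun n => ?_
  obtain ⟨h₀, h₁⟩ := hκ n
  have hstep : Y (n + 1) - Y n = κ n • (S (Y n) - Y n) := by rw [hY n]; module
  have hrest : S (Y n) - Y (n + 1) = (1 - κ n) • (S (Y n) - Y n) := by rw [hY n]; module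
  calc ‖S (Y (n + 1)) - Y (n + 1)‖
      ≤ ‖S (Y (n + 1)) - S (Y n)‖ + ‖S (Y n) - Y (n + 1)‖ :=
        norm_sub_le_norm_sub_add_norm_sub _ _ _
    _ ≤ ‖Y (n + 1) - Y n‖ + ‖S (Y n) - Y (n + 1)‖ := by gcongr; exact hS _ _
    _ = ‖S (Y n) - Y n‖ := by
      rw [hstep, hrest, norm_smul, norm_smul, Real.norm_of_nonneg h₀,
        Real.norm_of_nonneg (sub_nonneg.2 h₁)]
      ring

theorem summable_mul_norm_apply_sub_sq (hS : ∀ x y, ‖S x - S y‖ ≤ ‖x - y‖)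
    (hκ : ∀ n, κ n ∈ Set.Icc 0 1) (hY : ∀ n, Y (n + 1) = (1 - κ n) • Y n + κ n • S (Y n))
    {p : H} (hp : IsFixedPt S p) :
    Summable fun n => κ n * (1 - κ n) * ‖S (Y n) - Y n‖ ^ 2 := by
  have hnonneg : ∀ n, 0 ≤ κ n * (1 - κ n) * ‖S (Y n) - Y n‖ ^ 2 := fun n =>
    mul_nonneg (mul_nonneg (hκ n).1 (sub_nonneg.2 (hκ n).2)) (sq_nonneg _)
  have htelescope : ∀ N, ∑ n ∈ Finset.range N, κ n * (1 - κ n) * ‖S (Y n) - Y n‖ ^ 2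
      ≤ ‖Y 0 - p‖ ^ 2 - ‖Y N - p‖ ^ 2 := by
    intro N
    induction N with
    | zero => simp
    | succ N ih =>
      rw [Finset.sum_range_succ]
      linarith [norm_sub_sq_succ_le hS hY hp (hκ N).1]
  exact summable_of_sum_range_le hnonneg fun N =>
    (htelescope N).trans (sub_le_self _ (sq_nonneg _))

theorem tendsto_norm_apply_sub (hS : ∀ x y, ‖S x - S y‖ ≤ ‖x - y‖)
    (hκ : ∀ n, κ n ∈ Set.Icc 0 1) (hdiv : ¬Summable fun n => κ n * (1 - κ n))
    (hY : ∀ n, Y (n + 1) = (1 - κ n) • Y n + κ n • S (Y n)) {p : H} (hp : IsFixedPt S p) :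
    Tendsto (fun n => ‖S (Y n) - Y n‖) atTop (𝓝 0) := by
  have hsq : Tendsto (fun n => ‖S (Y n) - Y n‖ ^ 2) atTop (𝓝 0) :=
    Antitone.tendsto_zero_of_summable_mul_of_not_summable
      (fun m n hmn => pow_le_pow_left₀ (norm_nonneg _) (antitone_norm_apply_sub hS hκ hY hmn) 2)
      (fun n => sq_nonneg _) (fun n => mul_nonneg (hκ n).1 (sub_nonneg.2 (hκ n).2))
      (summable_mul_norm_apply_sub_sq hS hκ hY hp) hdiv
  simpa [comp_def, Real.sqrt_sq (norm_nonneg _)] using (Real.continuous_sqrt.tendsto 0).comp hsq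

theorem norm_le (hS : ∀ x y, ‖S x - S y‖ ≤ ‖x - y‖) (hκ : ∀ n, κ n ∈ Set.Icc 0 1)
    (hY : ∀ n, Y (n + 1) = (1 - κ n) • Y n + κ n • S (Y n)) {p : H} (hp : IsFixedPt S p)
    (n : ℕ) : ‖Y n‖ ≤ ‖p‖ + ‖Y 0 - p‖ :=
  (norm_le_norm_add_norm_sub' _ p).trans (by gcongr; exact antitone_norm_sub hS hκ hY hp n.zero_le)

theorem exists_tendsto_norm_sub (hS : ∀ x y, ‖S x - S y‖ ≤ ‖x - y‖)
    (hκ : ∀ n, κ n ∈ Set.Icc 0 1) (hY : ∀ n, Y (n + 1) = (1 - κ n) • Y n + κ n • S (Y n))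
    {p : H} (hp : IsFixedPt S p) : ∃ d, Tendsto (fun n => ‖Y n - p‖) atTop (𝓝 d) :=
  ⟨_, tendsto_atTop_ciInf (antitone_norm_sub hS hκ hY hp)
    ⟨0, Set.forall_mem_range.2 fun _ => norm_nonneg _⟩⟩

end KrasnoselskiiMann

open KrasnoselskiiMann

/-- Krasnosel'skii–Mann theorem: for a nonexpansive map `S` on a real Hilbert
space with a fixed point, and relaxation parameters `κ n ∈ (0,1]` with
`∑ κ n (1 - κ n) = ∞`, the iteration `Y (n+1) = (1 - κ n) • Y n + κ n • S (Y n)`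
converges weakly to a fixed point of `S`. -/
theorem stmt_4 {H : Type*} [NormedAddCommGroup H] [InnerProductSpace ℝ H]
    [CompleteSpace H]
    (S : H → H) (hS : ∀ x y : H, ‖S x - S y‖ ≤ ‖x - y‖)
    (hfixne : ∃ z : H, S z = z)
    (κ : ℕ → ℝ) (hκ : ∀ n, κ n ∈ Set.Ioc (0 : ℝ) 1)
    (hdiv : ¬ Summable (fun n => κ n * (1 - κ n)))
    (Y : ℕ → H) (hY : ∀ n, Y (n + 1) = (1 - κ n) • Y n + κ n • S (Y n)) :
    ∃ Ystar : H, S Ystar = Ystar ∧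
      ∀ z : H, Tendsto (fun n => (inner ℝ (Y n) z : ℝ)) atTop (𝓝 (inner ℝ Ystar z)) := by
  obtain ⟨p, hp⟩ := hfixne
  have hκ' : ∀ n, κ n ∈ Set.Icc 0 1 := fun n => Set.Ioc_subset_Icc_self (hκ n)
  have hres := tendsto_norm_apply_sub hS hκ' hdiv hY hp
  have hlim : ∀ U : Ultrafilter ℕ, (U : Filter ℕ) ≤ atTop →
      ∃ x, IsFixedPt S x ∧ ∀ z, Tendsto (fun n => ⟪Y n, z⟫) U (𝓝 ⟪x, z⟫) := fun U hU => by
    obtain ⟨x, hx⟩ := exists_tendsto_inner_of_norm_le U (norm_le hS hκ' hY hp)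
    exact ⟨x, isFixedPt_of_tendsto_inner hS (norm_le hS hκ' hY hp) hx (hres.mono_left hU), hx⟩
  obtain ⟨U₀, hU₀⟩ := exists_ultrafilter_le (atTop : Filter ℕ)
  obtain ⟨x₀, hx₀, hw₀⟩ := hlim U₀ hU₀
  refine ⟨x₀, hx₀, fun z => tendsto_iff_ultrafilter _ _ _ |>.2 fun U hU => ?_⟩
  obtain ⟨x, hx, hw⟩ := hlim U hU
  obtain ⟨d, hd⟩ := exists_tendsto_norm_sub hS hκ' hY hx
  obtain ⟨d₀, hd₀⟩ := exists_tendsto_norm_sub hS hκ' hY hx₀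
  rw [← eq_of_tendsto_inner_of_tendsto_norm_sub hU hU₀ hd hd₀ hw hw₀]
  exact hw z
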